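/- Suppose m₁|v| ≤ f(x,v) ≤ m₂|v| for all x, v (the p = 1 ellipticity), and let w = (w_0,…,w_m) be any discrete path minimizing H(w) = Σ_{k} f(w_k, w_{k+1}−w_k) over paths in a graph in which any two vertices at Euclidean distance less than ε are adjacent. Then for any indices i < j with |w_i − w_j| < ε, all intermediate vertices satisfy w_k ∈ B(w_i, 2(m₂/m₁)ε) for i ≤ k ≤ j. -/

import Mathlib

/-!
A minimizing path cannot afford a detour: if `|w_i - w_j| < ε`, the vertices `w_i` and `w_j`
are adjacent, so replacing the subpath from `w_i` to `w_j` by the single edge between them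
(or deleting it, if `w_i = w_j`) gives a competitor. Minimality therefore bounds the cost of the
subpath by `f(w_i, w_j - w_i) ≤ m₂ |w_j - w_i| < m₂ ε`, while ellipticity bounds the cost from
below by `m₁` times its length, which dominates `|w_k - w_i|` for every intermediate `k`.
-/

open Set

/-- The Riemann-sum cost of a discrete path. -/
noncomputable def Hsum {d : ℕ}
    (f : EuclideanSpace ℝ (Fin d) → EuclideanSpace ℝ (Fin d) → ℝ)
    (m : ℕ) (w : Fin (m + 1) → EuclideanSpace ℝ (Fin d)) : ℝ :=
  ∑ k : Fin m, f (w k.castSucc) (w k.succ - w k.castSucc)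

namespace DiscretePath

variable {α : Type*}

/-- Paths are indexed by `ℕ` (only an initial segment matters); `c x y` is the cost of the
step from `x` to `y`. -/
noncomputable def pathCost (c : α → α → ℝ) (W : ℕ → α) (lo hi : ℕ) : ℝ :=
  ∑ k ∈ Finset.Ico lo hi, c (W k) (W (k + 1))

def IsGraphPath (V : Set α) (Adj : α → α → Prop) (m : ℕ) (W : ℕ → α) : Prop :=
  (∀ n ≤ m, W n ∈ V) ∧ ∀ n < m, Adj (W n) (W (n + 1))

def IsCostMinimal (V : Set α) (Adj : α → α → Prop) (c : α → α → ℝ) (m : ℕ) (W : ℕ → α) :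
    Prop :=
  IsGraphPath V Adj m W ∧ ∀ (m' : ℕ) (U : ℕ → α), IsGraphPath V Adj m' U → U 0 = W 0 →
    U m' = W m → pathCost c W 0 m ≤ pathCost c U 0 m'

def splice (W : ℕ → α) (i s : ℕ) (n : ℕ) : α :=
  if n ≤ i then W n else W (n + s)

variable {V : Set α} {Adj : α → α → Prop} {c : α → α → ℝ} {W U : ℕ → α} {m i j s : ℕ}

theorem pathCost_add {lo mid hi : ℕ} (h₁ : lo ≤ mid) (h₂ : mid ≤ hi) :
    pathCost c W lo mid + pathCost c W mid hi = pathCost c W lo hi :=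
  Finset.sum_Ico_consecutive _ h₁ h₂

theorem pathCost_add_one (lo : ℕ) : pathCost c W lo (lo + 1) = c (W lo) (W (lo + 1)) := by
  simp [pathCost]

theorem pathCost_congr_shift {lo hi : ℕ} (h : ∀ n, lo ≤ n → n ≤ hi → U n = W (n + s)) :
    pathCost c U lo hi = pathCost c W (lo + s) (hi + s) := by
  rw [pathCost, pathCost, ← Finset.sum_Ico_add']
  refine Finset.sum_congr rfl fun n hn => ?_
  obtain ⟨hlo, hhi⟩ := Finset.mem_Ico.mp hn
  rw [h n hlo hhi.le, h (n + 1) (by omega) hhi, Nat.add_right_comm]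

theorem pathCost_congr {lo hi : ℕ} (h : ∀ n, lo ≤ n → n ≤ hi → U n = W n) :
    pathCost c U lo hi = pathCost c W lo hi :=
  pathCost_congr_shift (s := 0) h

theorem splice_of_le {n : ℕ} (h : n ≤ i) : splice W i s n = W n := if_pos h

theorem splice_of_lt {n : ℕ} (h : i < n) : splice W i s n = W (n + s) := if_neg (by omega)

theorem IsGraphPath.splice (hW : IsGraphPath V Adj m W)
    (hi : i < m - s → Adj (W i) (W (i + 1 + s))) :
    IsGraphPath V Adj (m - s) (splice W i s) := by
  refine ⟨fun n hn => ?_, fun n hn => ?_⟩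
  · unfold DiscretePath.splice
    split_ifs
    exacts [hW.1 n (by omega), hW.1 (n + s) (by omega)]
  · rcases lt_trichotomy n i with h | rfl | h
    · rw [splice_of_le h.le, splice_of_le h]
      exact hW.2 n (by omega)
    · rw [splice_of_le le_rfl, splice_of_lt (Nat.lt_add_one _)]
      exact hi hn
    · rw [splice_of_lt h, splice_of_lt (by omega), Nat.add_right_comm]
      exact hW.2 (n + s) (by omega)

theorem IsCostMinimal.pathCost_nonpos_of_eq (hW : IsCostMinimal V Adj c m W) (hij : i ≤ j)
    (hjm : j ≤ m) (heq : W i = W j) : pathCost c W i j ≤ 0 := by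
  have hs : i + (j - i) = j := by omega
  have hpath : IsGraphPath V Adj (m - (j - i)) (splice W i (j - i)) :=
    hW.1.splice fun h => by rw [heq, Nat.add_right_comm, hs]; exact hW.1.2 j (by omega)
  have hlast : splice W i (j - i) (m - (j - i)) = W m := by
    rcases eq_or_lt_of_le (show i ≤ m - (j - i) by omega) with h | h
    · rw [← h, splice_of_le le_rfl, heq, show j = m by omega]
    · rw [splice_of_lt h, Nat.sub_add_cancel (by omega)]
  have hcost : pathCost c (splice W i (j - i)) 0 (m - (j - i)) =
      pathCost c W 0 i + pathCost c W j m := by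
    have hafter : pathCost c (splice W i (j - i)) i (m - (j - i)) = pathCost c W j m := by
      rw [pathCost_congr_shift (s := j - i) fun n hn _ => ?_, hs, Nat.sub_add_cancel (by omega)]
      rcases eq_or_lt_of_le hn with rfl | h
      · rw [splice_of_le le_rfl, hs, heq]
      · exact splice_of_lt h
    rw [← pathCost_add (Nat.zero_le i) (by omega), hafter,
      pathCost_congr fun n _ hn => splice_of_le hn]
  have hle := hW.2 _ _ hpath (splice_of_le (Nat.zero_le i)) hlast
  rw [hcost, ← pathCost_add (Nat.zero_le i) (hij.trans hjm), ← pathCost_add hij hjm] at hle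
  linarith

theorem IsCostMinimal.pathCost_le_of_adj (hW : IsCostMinimal V Adj c m W) (hij : i < j)
    (hjm : j ≤ m) (hadj : Adj (W i) (W j)) : pathCost c W i j ≤ c (W i) (W j) := by
  have hs : i + 1 + (j - i - 1) = j := by omega
  have hpath : IsGraphPath V Adj (m - (j - i - 1)) (splice W i (j - i - 1)) :=
    hW.1.splice fun _ => by rwa [hs]
  have hlast : splice W i (j - i - 1) (m - (j - i - 1)) = W m := by
    rw [splice_of_lt (by omega), Nat.sub_add_cancel (by omega)]
  have hcost : pathCost c (splice W i (j - i - 1)) 0 (m - (j - i - 1)) =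
      pathCost c W 0 i + c (W i) (W j) + pathCost c W j m := by
    have hafter : pathCost c (splice W i (j - i - 1)) (i + 1) (m - (j - i - 1)) =
        pathCost c W j m := by
      rw [pathCost_congr_shift (s := j - i - 1) fun n hn _ => splice_of_lt hn, hs,
        Nat.sub_add_cancel (by omega)]
    rw [← pathCost_add (Nat.zero_le i) (by omega), ← pathCost_add (Nat.le_add_right i 1)
      (by omega), pathCost_add_one, splice_of_le le_rfl, splice_of_lt (Nat.lt_add_one i), hs,
      hafter, pathCost_congr fun n _ hn => splice_of_le hn, add_assoc]
  have hle := hW.2 _ _ hpath (splice_of_le (Nat.zero_le i)) hlast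
  rw [hcost, ← pathCost_add (Nat.zero_le i) (hij.le.trans hjm), ← pathCost_add hij.le hjm]
    at hle
  linarith

section Normed

variable {E : Type*}

theorem norm_sub_le_pathCost [SeminormedAddCommGroup E] {f : E → E → ℝ} {m₁ : ℝ}
    (hm₁ : 0 ≤ m₁) (hf : ∀ x v, m₁ * ‖v‖ ≤ f x v) (W : ℕ → E) {i k j : ℕ} (hik : i ≤ k)
    (hkj : k ≤ j) : m₁ * ‖W k - W i‖ ≤ pathCost (fun x y => f x (y - x)) W i j := by
  have hlength : ‖W k - W i‖ ≤ ∑ n ∈ Finset.Ico i j, ‖W (n + 1) - W n‖ :=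
    calc ‖W k - W i‖ = dist (W i) (W k) := by rw [dist_comm, dist_eq_norm]
      _ ≤ ∑ n ∈ Finset.Ico i k, dist (W n) (W (n + 1)) := dist_le_Ico_sum_dist W hik
      _ ≤ ∑ n ∈ Finset.Ico i j, dist (W n) (W (n + 1)) :=
        Finset.sum_le_sum_of_subset_of_nonneg (Finset.Ico_subset_Ico_right hkj)
          fun _ _ _ => dist_nonneg
      _ = ∑ n ∈ Finset.Ico i j, ‖W (n + 1) - W n‖ :=
        Finset.sum_congr rfl fun _ _ => by rw [dist_comm, dist_eq_norm]
  calc m₁ * ‖W k - W i‖ ≤ m₁ * ∑ n ∈ Finset.Ico i j, ‖W (n + 1) - W n‖ := by gcongr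
    _ = ∑ n ∈ Finset.Ico i j, m₁ * ‖W (n + 1) - W n‖ := Finset.mul_sum _ _ _
    _ ≤ pathCost (fun x y => f x (y - x)) W i j := Finset.sum_le_sum fun _ _ => hf _ _

theorem IsCostMinimal.pathCost_le_mul_norm [NormedAddCommGroup E] {V : Set E}
    {f : E → E → ℝ} {m₂ ε : ℝ} {W : ℕ → E} {m i j : ℕ}
    (hW : IsCostMinimal V (fun x y => 0 < ‖y - x‖ ∧ ‖y - x‖ < ε) (fun x y => f x (y - x)) m W)
    (hf : ∀ x v, f x v ≤ m₂ * ‖v‖) (hij : i ≤ j) (hjm : j ≤ m) (hnear : ‖W j - W i‖ < ε) :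
    pathCost (fun x y => f x (y - x)) W i j ≤ m₂ * ‖W j - W i‖ := by
  by_cases heq : W i = W j
  · rw [heq, sub_self, norm_zero, mul_zero]
    exact hW.pathCost_nonpos_of_eq hij hjm heq
  · have hlt : i < j := lt_of_le_of_ne hij fun h => heq (h ▸ rfl)
    have hpos : 0 < ‖W j - W i‖ := norm_pos_iff.2 (sub_ne_zero.2 (Ne.symm heq))
    exact (hW.pathCost_le_of_adj hlt hjm ⟨hpos, hnear⟩).trans (hf _ _)

end Normed

end DiscretePath

open DiscretePath

theorem Fin.clamp_val_self {m : ℕ} (l : Fin (m + 1)) : Fin.clamp l m = l :=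
  Fin.ext (Nat.min_eq_left l.is_le)

theorem hsum_eq_pathCost {d : ℕ} (f : EuclideanSpace ℝ (Fin d) → EuclideanSpace ℝ (Fin d) → ℝ)
    (m : ℕ) (U : ℕ → EuclideanSpace ℝ (Fin d)) :
    Hsum f m (fun l => U l) = pathCost (fun x y => f x (y - x)) U 0 m := by
  rw [Hsum, pathCost, ← Finset.range_eq_Ico, ← Fin.sum_univ_eq_sum_range]
  rfl

theorem isCostMinimal_comp_clamp {d : ℕ}
    {f : EuclideanSpace ℝ (Fin d) → EuclideanSpace ℝ (Fin d) → ℝ}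
    {V : Set (EuclideanSpace ℝ (Fin d))} {ε : ℝ} {m : ℕ}
    {w : Fin (m + 1) → EuclideanSpace ℝ (Fin d)}
    (hwV : ∀ j, w j ∈ V)
    (hwadj : ∀ j : Fin m, 0 < ‖w j.succ - w j.castSucc‖ ∧ ‖w j.succ - w j.castSucc‖ < ε)
    (hmin : ∀ (m' : ℕ) (u : Fin (m' + 1) → EuclideanSpace ℝ (Fin d)),
      (∀ j, u j ∈ V) → u 0 = w 0 → u (Fin.last m') = w (Fin.last m) →
      (∀ j : Fin m', 0 < ‖u j.succ - u j.castSucc‖ ∧ ‖u j.succ - u j.castSucc‖ < ε) →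
      Hsum f m w ≤ Hsum f m' u) :
    IsCostMinimal V (fun x y => 0 < ‖y - x‖ ∧ ‖y - x‖ < ε) (fun x y => f x (y - x)) m
      (fun n => w (Fin.clamp n m)) := by
  have hval (l : Fin (m + 1)) : w (Fin.clamp l m) = w l := congrArg w l.clamp_val_self
  refine ⟨⟨fun n _ => hwV _, fun n hn => ?_⟩, fun m' U hU h0 hlast => ?_⟩
  · have h := hwadj ⟨n, hn⟩
    rw [← hval (Fin.succ _), ← hval (Fin.castSucc _)] at h
    exact h
  · rw [← hsum_eq_pathCost, ← hsum_eq_pathCost, funext hval]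
    exact hmin m' (fun l => U l) (fun l => hU.1 l l.is_le) (h0.trans (hval 0))
      (hlast.trans (hval (Fin.last m))) fun l => hU.2 l l.is_lt

theorem stmt16_general {d : ℕ}
    (f : EuclideanSpace ℝ (Fin d) → EuclideanSpace ℝ (Fin d) → ℝ)
    (m₁ m₂ : ℝ) (hm₁ : 0 < m₁) (hm₂ : 0 < m₂)
    -- `p = 1` ellipticity:
    (hbound : ∀ x w : EuclideanSpace ℝ (Fin d), m₁ * ‖w‖ ≤ f x w ∧ f x w ≤ m₂ * ‖w‖)
    (V : Set (EuclideanSpace ℝ (Fin d))) (ε : ℝ)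
    (m : ℕ) (w : Fin (m + 1) → EuclideanSpace ℝ (Fin d))
    (hwV : ∀ j, w j ∈ V)
    (hwadj : ∀ j : Fin m, 0 < ‖w j.succ - w j.castSucc‖ ∧ ‖w j.succ - w j.castSucc‖ < ε)
    -- `w` minimizes the Riemann-sum cost over all graph paths in `V` (vertices at
    -- Euclidean distance less than `ε` are adjacent) with the same endpoints:
    (hmin : ∀ (m' : ℕ) (u : Fin (m' + 1) → EuclideanSpace ℝ (Fin d)),
      (∀ j, u j ∈ V) → u 0 = w 0 → u (Fin.last m') = w (Fin.last m) →
      (∀ j : Fin m', 0 < ‖u j.succ - u j.castSucc‖ ∧ ‖u j.succ - u j.castSucc‖ < ε) →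
      Hsum f m w ≤ Hsum f m' u) :
    ∀ i j k : Fin (m + 1), i ≤ k → k ≤ j → ‖w i - w j‖ < ε →
      ‖w k - w i‖ ≤ 2 * (m₂ / m₁) * ε := by
  intro i j k hik hkj hij
  have hlower := norm_sub_le_pathCost hm₁.le (fun x v => (hbound x v).1)
    (fun n => w (Fin.clamp n m)) (Fin.le_def.1 hik) (Fin.le_def.1 hkj)
  have hupper := (isCostMinimal_comp_clamp hwV hwadj hmin).pathCost_le_mul_norm
    (fun x v => (hbound x v).2) (Fin.le_def.1 (hik.trans hkj)) j.is_le
    (by simpa only [Fin.clamp_val_self, norm_sub_rev] using hij)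
  simp only [Fin.clamp_val_self] at hlower hupper
  rw [norm_sub_rev] at hij
  have hε : 0 < ε := (norm_nonneg _).trans_lt hij
  -- the argument gives the sharper bound `(m₂ / m₁) * ε`
  have hk : ‖w k - w i‖ ≤ m₂ / m₁ * ε := by
    rw [div_mul_eq_mul_div, le_div_iff₀ hm₁]
    calc ‖w k - w i‖ * m₁ ≤ m₂ * ‖w j - w i‖ := by linarith
      _ ≤ m₂ * ε := by gcongr
  have : 0 ≤ m₂ / m₁ * ε := by positivity
  linarith

theorem stmt16 {d : ℕ}
    (f : EuclideanSpace ℝ (Fin d) → EuclideanSpace ℝ (Fin d) → ℝ)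
    (m₁ m₂ : ℝ) (hm₁ : 0 < m₁) (hm₂ : 0 < m₂)
    -- `p = 1` ellipticity:
    (hbound : ∀ x w : EuclideanSpace ℝ (Fin d), m₁ * ‖w‖ ≤ f x w ∧ f x w ≤ m₂ * ‖w‖)
    (V : Set (EuclideanSpace ℝ (Fin d))) (ε : ℝ) (hε : 0 < ε)
    (m : ℕ) (w : Fin (m + 1) → EuclideanSpace ℝ (Fin d))
    (hwV : ∀ j, w j ∈ V)
    (hwadj : ∀ j : Fin m, 0 < ‖w j.succ - w j.castSucc‖ ∧ ‖w j.succ - w j.castSucc‖ < ε)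
    -- `w` minimizes the Riemann-sum cost over all graph paths in `V` (vertices at
    -- Euclidean distance less than `ε` are adjacent) with the same endpoints:
    (hmin : ∀ (m' : ℕ) (u : Fin (m' + 1) → EuclideanSpace ℝ (Fin d)),
      (∀ j, u j ∈ V) → u 0 = w 0 → u (Fin.last m') = w (Fin.last m) →
      (∀ j : Fin m', 0 < ‖u j.succ - u j.castSucc‖ ∧ ‖u j.succ - u j.castSucc‖ < ε) →
      Hsum f m w ≤ Hsum f m' u) :
    ∀ i j k : Fin (m + 1), i ≤ k → k ≤ j → ‖w i - w j‖ < ε →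
      ‖w k - w i‖ ≤ 2 * (m₂ / m₁) * ε :=
  stmt16_general f m₁ m₂ hm₁ hm₂ hbound V ε m w hwV hwadj hmin
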